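/- Suppose that: (a) for every ε > 0 there exists M = M(ε) ∈ ℝ with ‖G(u)‖_Σ ≤ exp(ε ‖u‖_X² + M) for all u ∈ X; (b) for every r > 0, sup{R(u) : ‖u‖_X ≤ r} < ∞; (c) μ₀({u : ‖u‖_X < r}) > 0 for every r > 0; and (d) there exists δ > 0 with ∫_X exp(δ ‖u‖_X²) dμ₀(u) < ∞. Then for every y ∈ ℝ^m one has 0 < Z(y) ≤ 1, so the posterior μ^y is a well-defined Borel probability measure, and for every r > 0 there exists C = C(r) > 0 such that d_Hell(μ^y, μ^{y'}) ≤ C ‖y − y'‖_Σ for all y, y' ∈ ℝ^m with max{‖y‖_Σ, ‖y'‖_Σ} ≤ r. -/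

import Mathlib

open MeasureTheory

/-- Normalization constant `Z = ∫_X exp(−F(u)) dμ₀(u)` for a potential `F`. -/
noncomputable def ZConst {X : Type*} [MeasurableSpace X] (μ₀ : Measure X) (F : X → ℝ) : ℝ :=
  ∫ u, Real.exp (-F u) ∂μ₀

/-- Density of the posterior measure with respect to `μ₀`: `Z⁻¹ exp(−F)`. -/
noncomputable def postDens {X : Type*} [MeasurableSpace X] (μ₀ : Measure X) (F : X → ℝ) :
    X → ℝ :=
  fun u => (ZConst μ₀ F)⁻¹ * Real.exp (-F u)

/-- Hellinger distance between two measures given by their densities `f = dμ/dμ₀`,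
`g = dμ'/dμ₀` with respect to `μ₀`:
`d_Hell = (½ ∫ (√f − √g)² dμ₀)^{1/2}`. -/
noncomputable def hellingerDist {X : Type*} [MeasurableSpace X] (μ₀ : Measure X)
    (f g : X → ℝ) : ℝ :=
  Real.sqrt ((1 / 2) * ∫ u, (Real.sqrt (f u) - Real.sqrt (g u)) ^ 2 ∂μ₀)

open Matrix in
/-- The weighted norm `‖v‖_Σ = |Σ^{−1/2} v|₂`, i.e. `√(vᵀ Σ⁻¹ v)`. -/
noncomputable def sigmaNorm {m : ℕ} (S : Matrix (Fin m) (Fin m) ℝ) (v : Fin m → ℝ) : ℝ :=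
  Real.sqrt (v ⬝ᵥ (S⁻¹ *ᵥ v))

/-- The potential `Φ^y(u) = ½ ‖G(u) − y‖_Σ²`. -/
noncomputable def potential {X : Type*} {m : ℕ} (S : Matrix (Fin m) (Fin m) ℝ)
    (G : X → Fin m → ℝ) (y : Fin m → ℝ) (u : X) : ℝ :=
  (1 / 2) * sigmaNorm S (G u - y) ^ 2

lemma my_exp_lip {a b : ℝ} (ha : 0 ≤ a) (hb : 0 ≤ b) :
    |Real.exp (-a) - Real.exp (-b)| ≤ |a - b| := by
  wlog h : b ≤ a generalizing a b
  · rw [abs_sub_comm, abs_sub_comm a b]; exact this hb ha (le_of_not_ge h)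
  have hmul : Real.exp (-a) = Real.exp (-b) * Real.exp (b - a) := by
    rw [← Real.exp_add]; ring_nf
  have h1 : (b - a) + 1 ≤ Real.exp (b - a) := Real.add_one_le_exp _
  have h2 : Real.exp (-b) ≤ 1 := Real.exp_le_one_iff.mpr (by linarith)
  have h3 : 0 < Real.exp (-b) := Real.exp_pos _
  have h4 : Real.exp (-a) ≤ Real.exp (-b) := Real.exp_le_exp.mpr (by linarith)
  rw [abs_of_nonpos (by linarith), abs_of_nonneg (by linarith)]
  nlinarith

lemma my_sqrt_exp (x : ℝ) : Real.sqrt (Real.exp x) = Real.exp (x / 2) := by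
  rw [show Real.exp x = Real.exp (x / 2) ^ 2 by rw [sq, ← Real.exp_add]; ring_nf,
    Real.sqrt_sq (Real.exp_nonneg _)]

section aux
open Matrix
variable {m : ℕ} {S : Matrix (Fin m) (Fin m) ℝ} (hS : S.PosDef)
include hS

lemma bform_nonneg (v : Fin m → ℝ) : 0 ≤ v ⬝ᵥ (S⁻¹ *ᵥ v) := by
  have := hS.inv.posSemidef.dotProduct_mulVec_nonneg v
  simpa using this

lemma bform_symm (v w : Fin m → ℝ) : v ⬝ᵥ (S⁻¹ *ᵥ w) = w ⬝ᵥ (S⁻¹ *ᵥ v) := by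
  have hH : S⁻¹ᵀ = S⁻¹ := by
    have := hS.inv.isHermitian
    simpa [Matrix.IsHermitian, Matrix.conjTranspose_eq_transpose_of_trivial] using this
  rw [Matrix.dotProduct_mulVec, ← Matrix.mulVec_transpose, hH, dotProduct_comm]

omit hS in
lemma sigmaNorm_nonneg (v : Fin m → ℝ) : 0 ≤ sigmaNorm S v := Real.sqrt_nonneg _

lemma sigmaNorm_sq (v : Fin m → ℝ) : sigmaNorm S v ^ 2 = v ⬝ᵥ (S⁻¹ *ᵥ v) :=
  Real.sq_sqrt (bform_nonneg hS v)

lemma bform_cs (v w : Fin m → ℝ) :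
    |v ⬝ᵥ (S⁻¹ *ᵥ w)| ≤ sigmaNorm S v * sigmaNorm S w := by
  have hq : ∀ x : ℝ, 0 ≤ (w ⬝ᵥ (S⁻¹ *ᵥ w)) * (x * x) + (2 * (v ⬝ᵥ (S⁻¹ *ᵥ w))) * x
      + v ⬝ᵥ (S⁻¹ *ᵥ v) := by
    intro x
    have h := bform_nonneg hS (v + x • w)
    have expand : (v + x • w) ⬝ᵥ (S⁻¹ *ᵥ (v + x • w)) =
        (w ⬝ᵥ (S⁻¹ *ᵥ w)) * (x * x) + (2 * (v ⬝ᵥ (S⁻¹ *ᵥ w))) * x + v ⬝ᵥ (S⁻¹ *ᵥ v) := by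
      rw [Matrix.mulVec_add, Matrix.mulVec_smul, add_dotProduct, smul_dotProduct,
        dotProduct_add, dotProduct_add, dotProduct_smul,
        dotProduct_smul, bform_symm hS w v]
      simp [smul_eq_mul]; ring
    rw [expand] at h; exact h
  have hd := discrim_le_zero hq
  rw [discrim] at hd
  have h2 : (v ⬝ᵥ (S⁻¹ *ᵥ w)) ^ 2 ≤ (v ⬝ᵥ (S⁻¹ *ᵥ v)) * (w ⬝ᵥ (S⁻¹ *ᵥ w)) := by nlinarith
  have := Real.sqrt_le_sqrt h2
  rw [Real.sqrt_sq_eq_abs] at this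
  calc |v ⬝ᵥ (S⁻¹ *ᵥ w)| ≤ Real.sqrt ((v ⬝ᵥ (S⁻¹ *ᵥ v)) * (w ⬝ᵥ (S⁻¹ *ᵥ w))) := this
    _ = sigmaNorm S v * sigmaNorm S w := by
        rw [Real.sqrt_mul (bform_nonneg hS v)]; rfl

lemma sigmaNorm_sq_sub_sq (a b : Fin m → ℝ) :
    |sigmaNorm S a ^ 2 - sigmaNorm S b ^ 2| ≤
      (sigmaNorm S a + sigmaNorm S b) * sigmaNorm S (a - b) := by
  have key : sigmaNorm S a ^ 2 - sigmaNorm S b ^ 2 =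
      (a - b) ⬝ᵥ (S⁻¹ *ᵥ a) + (a - b) ⬝ᵥ (S⁻¹ *ᵥ b) := by
    rw [sigmaNorm_sq hS, sigmaNorm_sq hS]
    rw [sub_dotProduct, sub_dotProduct, bform_symm hS b a]
    ring
  rw [key]
  calc |(a - b) ⬝ᵥ (S⁻¹ *ᵥ a) + (a - b) ⬝ᵥ (S⁻¹ *ᵥ b)|
      ≤ |(a - b) ⬝ᵥ (S⁻¹ *ᵥ a)| + |(a - b) ⬝ᵥ (S⁻¹ *ᵥ b)| := abs_add_le _ _
    _ ≤ sigmaNorm S (a-b) * sigmaNorm S a + sigmaNorm S (a-b) * sigmaNorm S b :=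
        add_le_add (bform_cs hS _ _) (bform_cs hS _ _)
    _ = (sigmaNorm S a + sigmaNorm S b) * sigmaNorm S (a - b) := by ring

lemma sigmaNorm_triangle (a b : Fin m → ℝ) :
    sigmaNorm S (a + b) ≤ sigmaNorm S a + sigmaNorm S b := by
  have h : sigmaNorm S (a + b) ^ 2 ≤ (sigmaNorm S a + sigmaNorm S b) ^ 2 := by
    rw [sigmaNorm_sq hS]
    have expand : (a + b) ⬝ᵥ (S⁻¹ *ᵥ (a + b)) =
        a ⬝ᵥ (S⁻¹ *ᵥ a) + 2 * (a ⬝ᵥ (S⁻¹ *ᵥ b)) + b ⬝ᵥ (S⁻¹ *ᵥ b) := by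
      simp only [Matrix.mulVec_add, add_dotProduct, dotProduct_add,
        bform_symm hS b a]
      ring
    rw [expand]
    have h1 := bform_cs hS a b
    have h2 : a ⬝ᵥ (S⁻¹ *ᵥ b) ≤ sigmaNorm S a * sigmaNorm S b := (abs_le.mp h1).2
    have := sigmaNorm_sq hS a; have := sigmaNorm_sq hS b
    nlinarith
  have h0 : 0 ≤ sigmaNorm S a + sigmaNorm S b :=
    add_nonneg (sigmaNorm_nonneg a) (sigmaNorm_nonneg b)
  nlinarith [sigmaNorm_nonneg (S := S) (a + b)]

lemma sigmaNorm_sub_le (a b : Fin m → ℝ) :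
    sigmaNorm S (a - b) ≤ sigmaNorm S a + sigmaNorm S b := by
  have hneg : sigmaNorm S (-b) = sigmaNorm S b := by
    unfold sigmaNorm
    rw [Matrix.mulVec_neg, neg_dotProduct, dotProduct_neg, neg_neg]
  have := sigmaNorm_triangle hS a (-b)
  rwa [sub_eq_add_neg, ← hneg] at *

omit hS in
lemma sigmaNorm_neg (v : Fin m → ℝ) : sigmaNorm S (-v) = sigmaNorm S v := by
  unfold sigmaNorm
  rw [Matrix.mulVec_neg, neg_dotProduct, dotProduct_neg, neg_neg]

omit hS in
lemma sigmaNorm_continuous : Continuous fun v : Fin m → ℝ => sigmaNorm S v := by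
  unfold sigmaNorm
  apply Real.continuous_sqrt.comp
  simp only [dotProduct, Matrix.mulVec]
  continuity

end aux

set_option maxHeartbeats 1000000 in
/-- well-posedness of the Bayesian inverse problem: the posterior `μ^y` is a
well-defined probability measure for every data `y`, and it is locally Lipschitz in the
data with respect to the Hellinger metric. -/
theorem posterior_well_posed_and_lipschitz_in_data
    {X : Type*} [NormedAddCommGroup X] [InnerProductSpace ℝ X] [CompleteSpace X]
    [TopologicalSpace.SeparableSpace X] [MeasurableSpace X] [BorelSpace X]
    (μ₀ : Measure X) [IsProbabilityMeasure μ₀]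
    {m : ℕ} (S : Matrix (Fin m) (Fin m) ℝ) (hS : S.PosDef)
    (G : X → Fin m → ℝ) (hGm : Measurable G)
    (R : X → ℝ) (hRm : Measurable R) (hR0 : ∀ u, 0 ≤ R u)
    (ha : ∀ ε > (0 : ℝ), ∃ M : ℝ, ∀ u : X,
      sigmaNorm S (G u) ≤ Real.exp (ε * ‖u‖ ^ 2 + M))
    (hb : ∀ r > (0 : ℝ), ∃ K : ℝ, ∀ u : X, ‖u‖ ≤ r → R u ≤ K)
    (hc : ∀ r > (0 : ℝ), 0 < μ₀ {u : X | ‖u‖ < r})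
    (hd : ∃ δ > (0 : ℝ), Integrable (fun u : X => Real.exp (δ * ‖u‖ ^ 2)) μ₀) :
    (∀ y : Fin m → ℝ,
      0 < ZConst μ₀ (fun u => potential S G y u + R u) ∧
      ZConst μ₀ (fun u => potential S G y u + R u) ≤ 1 ∧
      IsProbabilityMeasure (μ₀.withDensity
        (fun u => ENNReal.ofReal (postDens μ₀ (fun w => potential S G y w + R w) u)))) ∧
    ∀ r > (0 : ℝ), ∃ C > (0 : ℝ), ∀ y y' : Fin m → ℝ,
      sigmaNorm S y ≤ r → sigmaNorm S y' ≤ r →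
      hellingerDist μ₀ (postDens μ₀ (fun w => potential S G y w + R w))
          (postDens μ₀ (fun w => potential S G y' w + R w)) ≤
        C * sigmaNorm S (y - y') := by
  obtain ⟨δ, hδ, hintδ⟩ := hd
  obtain ⟨M, hM⟩ := ha (δ/4) (by positivity)
  -- measurability
  have hFm : ∀ y : Fin m → ℝ, Measurable (fun u => potential S G y u + R u) := by
    intro y
    have h1 : Measurable fun u => G u - y := hGm.sub measurable_const
    have h2 : Measurable fun u => sigmaNorm S (G u - y) :=
      sigmaNorm_continuous.measurable.comp h1
    exact (measurable_const.mul (h2.pow_const 2)).add hRm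
  have hF0 : ∀ (y : Fin m → ℝ) u, 0 ≤ potential S G y u + R u := by
    intro y u
    have h1 := hR0 u
    have h2 : 0 ≤ potential S G y u := by
      unfold potential; positivity
    linarith
  have hintF : ∀ y : Fin m → ℝ,
      Integrable (fun u => Real.exp (-(potential S G y u + R u))) μ₀ := by
    intro y
    refine Integrable.mono' (integrable_const 1)
      ((Real.measurable_exp.comp (hFm y).neg).aestronglyMeasurable) ?_
    filter_upwards with u
    rw [Real.norm_eq_abs, abs_of_nonneg (Real.exp_nonneg _)]
    exact Real.exp_le_one_iff.mpr (neg_nonpos.mpr (hF0 y u))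
  have hZle : ∀ y : Fin m → ℝ, ZConst μ₀ (fun u => potential S G y u + R u) ≤ 1 := by
    intro y
    have h : ∫ u, Real.exp (-(potential S G y u + R u)) ∂μ₀ ≤ ∫ _u, (1:ℝ) ∂μ₀ :=
      integral_mono (hintF y) (integrable_const 1)
        (fun u => Real.exp_le_one_iff.mpr (neg_nonpos.mpr (hF0 y u)))
    simpa [ZConst] using h
  -- uniform lower bound on Z
  have hZlow : ∀ r : ℝ, 0 < r → ∃ z : ℝ, 0 < z ∧ ∀ y : Fin m → ℝ, sigmaNorm S y ≤ r →
      z ≤ ZConst μ₀ (fun u => potential S G y u + R u) := by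
    intro r hr
    obtain ⟨K, hK⟩ := hb 1 one_pos
    set c : ℝ := (1/2) * (Real.exp (δ/4 + M) + r)^2 + max K 0 with hc_def
    have hm1 : 0 < (μ₀ {u : X | ‖u‖ < 1}).toReal :=
      ENNReal.toReal_pos (hc 1 one_pos).ne' (measure_ne_top μ₀ _)
    refine ⟨Real.exp (-c) * (μ₀ {u : X | ‖u‖ < 1}).toReal, by positivity, ?_⟩
    intro y hy
    set s : Set X := {u : X | ‖u‖ < 1} with hs_def
    have hsm : MeasurableSet s := (isOpen_lt continuous_norm continuous_const).measurableSet
    have hpt : ∀ u ∈ s, Real.exp (-c) ≤ Real.exp (-(potential S G y u + R u)) := by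
      intro u hu
      apply Real.exp_le_exp.mpr
      apply neg_le_neg
      have hu1 : ‖u‖ < 1 := hu
      have hG1 : sigmaNorm S (G u) ≤ Real.exp (δ/4 + M) := by
        refine le_trans (hM u) (Real.exp_le_exp.mpr ?_)
        have h2 : ‖u‖^2 ≤ 1 := by nlinarith only [norm_nonneg u, hu1]
        have h3 : δ/4 * ‖u‖^2 ≤ δ/4 * 1 :=
          mul_le_mul_of_nonneg_left h2 (by linarith only [hδ])
        linarith only [h3]
      have htr : sigmaNorm S (G u - y) ≤ Real.exp (δ/4+M) + r :=
        le_trans (sigmaNorm_sub_le hS _ _) (add_le_add hG1 hy)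
      have hΦ : potential S G y u ≤ (1/2) * (Real.exp (δ/4+M) + r)^2 := by
        unfold potential
        have h0 := sigmaNorm_nonneg (S := S) (G u - y)
        have hp := pow_le_pow_left₀ h0 htr 2
        linarith only [hp]
      have hRu : R u ≤ max K 0 := le_trans (hK u hu1.le) (le_max_left _ _)
      rw [hc_def]
      linarith
    calc Real.exp (-c) * (μ₀ s).toReal
        = ∫ _u in s, Real.exp (-c) ∂μ₀ := by rw [setIntegral_const, smul_eq_mul, mul_comm]; rfl
      _ ≤ ∫ u in s, Real.exp (-(potential S G y u + R u)) ∂μ₀ := by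
          refine setIntegral_mono_on (integrableOn_const (measure_lt_top μ₀ s).ne)
            ((hintF y).integrableOn) hsm hpt
      _ ≤ ∫ u, Real.exp (-(potential S G y u + R u)) ∂μ₀ :=
          setIntegral_le_integral (hintF y) (ae_of_all _ fun u => Real.exp_nonneg _)
  have hZpos : ∀ y : Fin m → ℝ, 0 < ZConst μ₀ (fun u => potential S G y u + R u) := by
    intro y
    have hny := sigmaNorm_nonneg (S := S) y
    obtain ⟨z, hz, hzle⟩ := hZlow (sigmaNorm S y + 1) (by linarith)
    exact lt_of_lt_of_le hz (hzle y (by linarith))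
  constructor
  · -- part 1
    intro y
    refine ⟨hZpos y, hZle y, ?_⟩
    constructor
    rw [withDensity_apply _ MeasurableSet.univ, Measure.restrict_univ]
    have hgint : Integrable (postDens μ₀ (fun w => potential S G y w + R w)) μ₀ :=
      (hintF y).const_mul _
    have hgnn : 0 ≤ᵐ[μ₀] postDens μ₀ (fun w => potential S G y w + R w) :=
      ae_of_all _ fun u => mul_nonneg (inv_nonneg.mpr (hZpos y).le) (Real.exp_nonneg _)
    rw [← ofReal_integral_eq_lintegral_ofReal hgint hgnn]
    have : ∫ u, postDens μ₀ (fun w => potential S G y w + R w) u ∂μ₀ = 1 := by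
      unfold postDens
      rw [integral_const_mul]
      exact inv_mul_cancel₀ (hZpos y).ne'
    rw [this, ENNReal.ofReal_one]
  · -- part 2
    intro r hr
    obtain ⟨z, hz0, hzle⟩ := hZlow r hr
    set I : ℝ := ∫ u, Real.exp (δ * ‖u‖^2) ∂μ₀ with hI_def
    have hI0 : 0 ≤ I := integral_nonneg fun u => Real.exp_nonneg _
    set cA : ℝ := 2 * Real.exp (2*M) + 2*r^2 with hcA_def
    have hcA0 : 0 ≤ cA := by positivity
    set D1 : ℝ := (Real.exp M + r) * I with hD1_def
    set Csq : ℝ := z⁻¹/4 * cA * I + z⁻¹^3 * D1^2 with hCsq_def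
    have hCsq0 : 0 ≤ Csq := by
      have h1 : 0 ≤ z⁻¹/4 * cA * I := mul_nonneg (by positivity) hI0
      have h2 : 0 ≤ z⁻¹^3 * D1^2 := by positivity
      rw [hCsq_def]; linarith only [h1, h2]
    refine ⟨Real.sqrt Csq + 1, by positivity, ?_⟩
    intro y y' hy hy'
    set t := sigmaNorm S (y - y') with ht_def
    have ht0 : 0 ≤ t := sigmaNorm_nonneg _
    set F1 : X → ℝ := fun w => potential S G y w + R w with hF1_def
    set F2 : X → ℝ := fun w => potential S G y' w + R w with hF2_def
    set Z1 : ℝ := ZConst μ₀ F1 with hZ1_def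
    set Z2 : ℝ := ZConst μ₀ F2 with hZ2_def
    have hZ1pos : 0 < Z1 := hZpos y
    have hZ2pos : 0 < Z2 := hZpos y'
    have hz1 : z ≤ Z1 := hzle y hy
    have hz2 : z ≤ Z2 := hzle y' hy'
    have hZ2le : Z2 ≤ 1 := hZle y'
    -- potential difference bounds
    have hΦd : ∀ u, |potential S G y u - potential S G y' u| ≤ (sigmaNorm S (G u) + r) * t := by
      intro u
      have key := sigmaNorm_sq_sub_sq hS (G u - y) (G u - y')
      have he : (G u - y) - (G u - y') = -(y - y') := by abel
      rw [he, sigmaNorm_neg, ← ht_def] at key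
      have h1 : sigmaNorm S (G u - y) ≤ sigmaNorm S (G u) + r :=
        le_trans (sigmaNorm_sub_le hS _ _) (add_le_add le_rfl hy)
      have h2 : sigmaNorm S (G u - y') ≤ sigmaNorm S (G u) + r :=
        le_trans (sigmaNorm_sub_le hS _ _) (add_le_add le_rfl hy')
      have h3 : 0 ≤ sigmaNorm S (G u - y) := sigmaNorm_nonneg _
      have h4 : 0 ≤ sigmaNorm S (G u - y') := sigmaNorm_nonneg _
      have heq : potential S G y u - potential S G y' u =
          (1/2) * (sigmaNorm S (G u - y)^2 - sigmaNorm S (G u - y')^2) := by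
        unfold potential; ring
      rw [heq, abs_mul, abs_of_nonneg (by norm_num : (0:ℝ) ≤ 1/2)]
      have h5 : (sigmaNorm S (G u - y) + sigmaNorm S (G u - y')) * t
          ≤ (2*(sigmaNorm S (G u) + r)) * t :=
        mul_le_mul_of_nonneg_right (by linarith only [h1, h2]) ht0
      linarith only [key, h5,
        abs_nonneg (sigmaNorm S (G u - y)^2 - sigmaNorm S (G u - y')^2)]
    have hsqb : ∀ u, (potential S G y u - potential S G y' u)^2 ≤
        cA * t^2 * Real.exp (δ*‖u‖^2) := by
      intro u
      have h1 := hΦd u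
      have h2 := hM u
      have hn0 : 0 ≤ sigmaNorm S (G u) := sigmaNorm_nonneg _
      have e1 : Real.exp (δ/4*‖u‖^2 + M) ^ 2 = Real.exp (δ/2*‖u‖^2 + 2*M) := by
        rw [sq, ← Real.exp_add]; ring_nf
      have e2 : Real.exp (δ/2*‖u‖^2 + 2*M) ≤ Real.exp (2*M) * Real.exp (δ*‖u‖^2) := by
        rw [← Real.exp_add]
        apply Real.exp_le_exp.mpr
        linarith only [mul_nonneg hδ.le (sq_nonneg ‖u‖)]
      have e3 : (1:ℝ) ≤ Real.exp (δ*‖u‖^2) := Real.one_le_exp (by positivity)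
      have hb1 : (potential S G y u - potential S G y' u)^2 ≤
          ((sigmaNorm S (G u) + r) * t)^2 := by
        have hp := pow_le_pow_left₀ (abs_nonneg _) h1 2
        rwa [sq_abs] at hp
      have hb2 : (sigmaNorm S (G u) + r)^2 ≤ cA * Real.exp (δ*‖u‖^2) := by
        have hsq : sigmaNorm S (G u)^2 ≤ Real.exp (2*M) * Real.exp (δ*‖u‖^2) := by
          have hp := pow_le_pow_left₀ hn0 h2 2
          rw [e1] at hp
          exact le_trans hp e2
        have t1 : (sigmaNorm S (G u) + r)^2 ≤ 2*sigmaNorm S (G u)^2 + 2*r^2 := by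
          nlinarith only [sq_nonneg (sigmaNorm S (G u) - r)]
        have u2 : r^2 ≤ r^2 * Real.exp (δ*‖u‖^2) := by
          have hu2 := mul_le_mul_of_nonneg_left e3 (sq_nonneg r)
          linarith only [hu2]
        have t3 : 2*(Real.exp (2*M)*Real.exp (δ*‖u‖^2)) + 2*(r^2*Real.exp (δ*‖u‖^2))
            = (2*Real.exp (2*M) + 2*r^2)*Real.exp (δ*‖u‖^2) := by ring
        rw [hcA_def]
        linarith only [t1, hsq, u2, t3]
      calc (potential S G y u - potential S G y' u)^2
          ≤ ((sigmaNorm S (G u) + r) * t)^2 := hb1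
        _ = (sigmaNorm S (G u) + r)^2 * t^2 := by ring
        _ ≤ (cA * Real.exp (δ*‖u‖^2)) * t^2 :=
            mul_le_mul_of_nonneg_right hb2 (sq_nonneg t)
        _ = cA * t^2 * Real.exp (δ*‖u‖^2) := by ring
    have habsb : ∀ u, |potential S G y u - potential S G y' u| ≤
        (Real.exp M + r) * t * Real.exp (δ*‖u‖^2) := by
      intro u
      have h1 := hΦd u
      have h2 := hM u
      have hn0 : 0 ≤ sigmaNorm S (G u) := sigmaNorm_nonneg _
      have e3 : (1:ℝ) ≤ Real.exp (δ*‖u‖^2) := Real.one_le_exp (by positivity)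
      have e4 : Real.exp (δ/4*‖u‖^2 + M) ≤ Real.exp M * Real.exp (δ*‖u‖^2) := by
        rw [← Real.exp_add]
        apply Real.exp_le_exp.mpr
        linarith only [mul_nonneg hδ.le (sq_nonneg ‖u‖)]
      have w0 : sigmaNorm S (G u) ≤ Real.exp M * Real.exp (δ*‖u‖^2) := le_trans h2 e4
      have w1 : r ≤ r * Real.exp (δ*‖u‖^2) := by
        have hw1 := mul_le_mul_of_nonneg_left e3 hr.le
        linarith only [hw1]
      calc |potential S G y u - potential S G y' u|
          ≤ (sigmaNorm S (G u) + r) * t := h1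
        _ ≤ (Real.exp M * Real.exp (δ*‖u‖^2) + r * Real.exp (δ*‖u‖^2)) * t :=
            mul_le_mul_of_nonneg_right (by linarith only [w0, w1]) ht0
        _ = (Real.exp M + r) * t * Real.exp (δ*‖u‖^2) := by ring
    -- measurability and integrability
    have hΦdm : Measurable fun u => potential S G y u - potential S G y' u := by
      have h : (fun u => potential S G y u - potential S G y' u)
          = fun u => F1 u - F2 u := by
        funext u; rw [hF1_def, hF2_def]; ring
      rw [h]; exact (hFm y).sub (hFm y')
    have hint_sq : Integrable (fun u => (potential S G y u - potential S G y' u)^2) μ₀ := by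
      refine Integrable.mono' (hintδ.const_mul (cA * t^2))
        ((hΦdm.pow_const 2).aestronglyMeasurable) ?_
      filter_upwards with u
      rw [Real.norm_eq_abs, abs_of_nonneg (sq_nonneg _)]
      exact hsqb u
    -- Z difference bound
    have hZd : |Z1 - Z2| ≤ D1 * t := by
      have e : Z1 - Z2 = ∫ u, (Real.exp (-F1 u) - Real.exp (-F2 u)) ∂μ₀ := by
        rw [integral_sub (hintF y) (hintF y')]; rfl
      have step1 : |Z1 - Z2| ≤ ∫ u, |Real.exp (-F1 u) - Real.exp (-F2 u)| ∂μ₀ := by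
        rw [e]
        simpa [Real.norm_eq_abs] using
          norm_integral_le_integral_norm (fun u => Real.exp (-F1 u) - Real.exp (-F2 u)) (μ := μ₀)
      have step2 : ∫ u, |Real.exp (-F1 u) - Real.exp (-F2 u)| ∂μ₀ ≤
          ∫ u, (Real.exp M + r) * t * Real.exp (δ*‖u‖^2) ∂μ₀ := by
        refine integral_mono ((hintF y).sub (hintF y')).abs (hintδ.const_mul _) ?_
        intro u
        have hlip := my_exp_lip (hF0 y u) (hF0 y' u)
        have heq : potential S G y u + R u - (potential S G y' u + R u)
            = potential S G y u - potential S G y' u := by ring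
        calc |Real.exp (-F1 u) - Real.exp (-F2 u)|
            ≤ |F1 u - F2 u| := my_exp_lip (hF0 y u) (hF0 y' u)
          _ = |potential S G y u - potential S G y' u| := by
              rw [hF1_def, hF2_def]; simp only []; rw [heq]
          _ ≤ (Real.exp M + r) * t * Real.exp (δ*‖u‖^2) := habsb u
      have step3 : ∫ u, (Real.exp M + r) * t * Real.exp (δ*‖u‖^2) ∂μ₀
          = (Real.exp M + r) * t * I := by
        rw [hI_def, integral_const_mul]
      calc |Z1 - Z2| ≤ ∫ u, |Real.exp (-F1 u) - Real.exp (-F2 u)| ∂μ₀ := step1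
        _ ≤ (Real.exp M + r) * t * I := by rw [← step3]; exact step2
        _ = D1 * t := by rw [hD1_def]; ring
    -- square roots of Z
    set s1 : ℝ := Real.sqrt Z1 with hs1_def
    set s2 : ℝ := Real.sqrt Z2 with hs2_def
    have hs1sq : s1^2 = Z1 := Real.sq_sqrt hZ1pos.le
    have hs2sq : s2^2 = Z2 := Real.sq_sqrt hZ2pos.le
    have hsz : 0 < Real.sqrt z := Real.sqrt_pos.mpr hz0
    have hs1z : Real.sqrt z ≤ s1 := Real.sqrt_le_sqrt hz1
    have hs2z : Real.sqrt z ≤ s2 := Real.sqrt_le_sqrt hz2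
    have hs1pos : 0 < s1 := lt_of_lt_of_le hsz hs1z
    have hs2pos : 0 < s2 := lt_of_lt_of_le hsz hs2z
    have hzsq : Real.sqrt z ^ 2 = z := Real.sq_sqrt hz0.le
    set c0 : ℝ := s1⁻¹ - s2⁻¹ with hc0_def
    have hc0b : c0^2 * z^3 ≤ (Z1 - Z2)^2 := by
      have hz_s1 : z ≤ s1^2 := by
        have hp := pow_le_pow_left₀ (Real.sqrt_nonneg z) hs1z 2
        rw [hzsq] at hp; exact hp
      have hz_s2 : z ≤ s2^2 := by
        have hp := pow_le_pow_left₀ (Real.sqrt_nonneg z) hs2z 2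
        rw [hzsq] at hp; exact hp
      have hz_s12 : z ≤ (s1+s2)^2 := by
        linarith only [hz_s1, sq_nonneg s2, mul_nonneg hs1pos.le hs2pos.le]
      have hz3 : z^3 ≤ (s1+s2)^2 * (s1^2 * s2^2) := by
        have h1 : z * z ≤ s1^2 * s2^2 :=
          mul_le_mul hz_s1 hz_s2 hz0.le (sq_nonneg _)
        have h2 : z * (z*z) ≤ (s1+s2)^2 * (s1^2 * s2^2) :=
          mul_le_mul hz_s12 h1 (mul_nonneg hz0.le hz0.le) (sq_nonneg _)
        linarith only [h2]
      have e1 : c0^2 * ((s1+s2)^2 * (s1^2*s2^2)) = (s2^2 - s1^2)^2 := by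
        rw [hc0_def]
        field_simp
        ring
      calc c0^2 * z^3
          ≤ c0^2 * ((s1+s2)^2 * (s1^2*s2^2)) :=
            mul_le_mul_of_nonneg_left hz3 (sq_nonneg c0)
        _ = (s2^2 - s1^2)^2 := e1
        _ = (Z1 - Z2)^2 := by rw [hs1sq, hs2sq]; ring
    -- pointwise Hellinger bound
    have hsqrt1 : ∀ u, Real.sqrt (postDens μ₀ F1 u) = s1⁻¹ * Real.exp (-(F1 u)/2) := by
      intro u
      unfold postDens
      rw [← hZ1_def, Real.sqrt_mul (inv_nonneg.mpr hZ1pos.le), Real.sqrt_inv, my_sqrt_exp,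
        ← hs1_def, neg_div]
    have hsqrt2 : ∀ u, Real.sqrt (postDens μ₀ F2 u) = s2⁻¹ * Real.exp (-(F2 u)/2) := by
      intro u
      unfold postDens
      rw [← hZ2_def, Real.sqrt_mul (inv_nonneg.mpr hZ2pos.le), Real.sqrt_inv, my_sqrt_exp,
        ← hs2_def, neg_div]
    have hptH : ∀ u, (Real.sqrt (postDens μ₀ F1 u) - Real.sqrt (postDens μ₀ F2 u))^2 ≤
        z⁻¹/2 * (potential S G y u - potential S G y' u)^2
          + 2*c0^2 * Real.exp (-(F2 u)) := by
      intro u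
      rw [hsqrt1 u, hsqrt2 u]
      set a : ℝ := Real.exp (-(F1 u)/2) with ha_def
      set b : ℝ := Real.exp (-(F2 u)/2) with hb_def
      have hbsq : b^2 = Real.exp (-(F2 u)) := by
        rw [hb_def, sq, ← Real.exp_add]; ring_nf
      have hsplit : s1⁻¹ * a - s2⁻¹ * b = s1⁻¹ * (a - b) + c0 * b := by
        rw [hc0_def]; ring
      have hkey1 : (s1⁻¹ * a - s2⁻¹ * b)^2 ≤ 2*(s1⁻¹ * (a-b))^2 + 2*(c0*b)^2 := by
        rw [hsplit]
        linarith only [sq_nonneg (s1⁻¹ * (a-b) - c0*b)]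
      have hlip : |a - b| ≤ (1/2) * |potential S G y u - potential S G y' u| := by
        have h := my_exp_lip (a := F1 u / 2) (b := F2 u / 2)
          (by have := hF0 y u
              show (0:ℝ) ≤ (potential S G y u + R u) / 2
              linarith only [this])
          (by have := hF0 y' u
              show (0:ℝ) ≤ (potential S G y' u + R u) / 2
              linarith only [this])
        have he1 : -(F1 u)/2 = -(F1 u / 2) := by ring
        have he2 : -(F2 u)/2 = -(F2 u / 2) := by ring
        rw [ha_def, hb_def, he1, he2]
        have heq : F1 u / 2 - F2 u / 2 =
            (1/2) * (potential S G y u - potential S G y' u) := by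
          rw [hF1_def, hF2_def]; ring
        rw [heq, abs_mul, abs_of_nonneg (by norm_num : (0:ℝ) ≤ 1/2)] at h
        exact h
      have hkey2 : (a-b)^2 ≤ (1/4) * (potential S G y u - potential S G y' u)^2 := by
        have hp := pow_le_pow_left₀ (abs_nonneg (a-b)) hlip 2
        rw [sq_abs, mul_pow, sq_abs] at hp
        linarith only [hp]
      have hkey3 : s1⁻¹^2 ≤ z⁻¹ := by
        have h1 : s1⁻¹ ≤ (Real.sqrt z)⁻¹ := by
          apply inv_anti₀ hsz hs1z
        have h2 : (Real.sqrt z)⁻¹^2 = z⁻¹ := by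
          rw [inv_pow, hzsq]
        have hp := pow_le_pow_left₀ (inv_nonneg.mpr hs1pos.le) h1 2
        rw [h2] at hp; exact hp
      have hz_inv0 : 0 ≤ z⁻¹ := inv_nonneg.mpr hz0.le
      calc (s1⁻¹ * a - s2⁻¹ * b)^2 ≤ 2*(s1⁻¹ * (a-b))^2 + 2*(c0*b)^2 := hkey1
        _ = 2*s1⁻¹^2*(a-b)^2 + 2*c0^2*b^2 := by ring
        _ ≤ 2*z⁻¹*((1/4) * (potential S G y u - potential S G y' u)^2) + 2*c0^2*b^2 := by
            have hm1 : 2*s1⁻¹^2*(a-b)^2 ≤ 2*z⁻¹*(a-b)^2 := by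
              have := mul_le_mul_of_nonneg_right hkey3 (sq_nonneg (a-b))
              linarith only [this]
            have hm2 : 2*z⁻¹*(a-b)^2 ≤
                2*z⁻¹*((1/4) * (potential S G y u - potential S G y' u)^2) := by
              have := mul_le_mul_of_nonneg_left hkey2 hz_inv0
              linarith only [this]
            linarith only [hm1, hm2]
        _ = z⁻¹/2 * (potential S G y u - potential S G y' u)^2 + 2*c0^2 * b^2 := by ring
        _ = z⁻¹/2 * (potential S G y u - potential S G y' u)^2
            + 2*c0^2 * Real.exp (-(F2 u)) := by rw [hbsq]
    -- integrate
    set H : X → ℝ := fun u => z⁻¹/2 * (potential S G y u - potential S G y' u)^2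
      + 2*c0^2 * Real.exp (-(F2 u)) with hH_def
    have hintH : Integrable H μ₀ := (hint_sq.const_mul _).add ((hintF y').const_mul _)
    have hmeas_lhs : Measurable fun u =>
        (Real.sqrt (postDens μ₀ F1 u) - Real.sqrt (postDens μ₀ F2 u))^2 := by
      have m1 : Measurable (postDens μ₀ F1) := (Real.measurable_exp.comp (hFm y).neg).const_mul _
      have m2 : Measurable (postDens μ₀ F2) := (Real.measurable_exp.comp (hFm y').neg).const_mul _
      exact (((Real.continuous_sqrt.measurable.comp m1).sub
        (Real.continuous_sqrt.measurable.comp m2)).pow_const 2)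
    have hint_lhs : Integrable (fun u =>
        (Real.sqrt (postDens μ₀ F1 u) - Real.sqrt (postDens μ₀ F2 u))^2) μ₀ := by
      refine Integrable.mono' hintH hmeas_lhs.aestronglyMeasurable ?_
      filter_upwards with u
      rw [Real.norm_eq_abs, abs_of_nonneg (sq_nonneg _)]
      exact hptH u
    have hIH : ∫ u, (Real.sqrt (postDens μ₀ F1 u) - Real.sqrt (postDens μ₀ F2 u))^2 ∂μ₀
        ≤ ∫ u, H u ∂μ₀ := integral_mono hint_lhs hintH hptH
    have hintH_val : ∫ u, H u ∂μ₀ =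
        z⁻¹/2 * (∫ u, (potential S G y u - potential S G y' u)^2 ∂μ₀) + 2*c0^2 * Z2 := by
      rw [hH_def, integral_add (hint_sq.const_mul _) ((hintF y').const_mul _),
        integral_const_mul, integral_const_mul]
      rfl
    have hintsq_le : ∫ u, (potential S G y u - potential S G y' u)^2 ∂μ₀ ≤ cA * t^2 * I := by
      have h := integral_mono hint_sq (hintδ.const_mul (cA * t^2)) hsqb
      rwa [integral_const_mul, ← hI_def] at h
    have hfinal : ∫ u, (Real.sqrt (postDens μ₀ F1 u) - Real.sqrt (postDens μ₀ F2 u))^2 ∂μ₀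
        ≤ 2 * Csq * t^2 := by
      have h1 : z⁻¹/2 * (∫ u, (potential S G y u - potential S G y' u)^2 ∂μ₀)
          ≤ z⁻¹/2 * (cA * t^2 * I) := by
        apply mul_le_mul_of_nonneg_left hintsq_le
        positivity
      have h3 : c0^2 ≤ z⁻¹^3 * (D1 * t)^2 := by
        have hD1t : (Z1 - Z2)^2 ≤ (D1*t)^2 := by
          have hp := pow_le_pow_left₀ (abs_nonneg (Z1 - Z2)) hZd 2
          rwa [sq_abs] at hp
        have hzp3 : 0 < z^3 := by positivity
        have hcc : c0^2 * z^3 ≤ (D1*t)^2 := le_trans hc0b hD1t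
        have hdiv : c0^2 ≤ (D1*t)^2 / z^3 := (le_div_iff₀ hzp3).mpr hcc
        have he : (D1*t)^2 / z^3 = (z^3)⁻¹ * (D1*t)^2 := by ring
        rw [inv_pow]
        linarith only [hdiv, he.le, he.ge]
      calc ∫ u, (Real.sqrt (postDens μ₀ F1 u) - Real.sqrt (postDens μ₀ F2 u))^2 ∂μ₀
          ≤ ∫ u, H u ∂μ₀ := hIH
        _ = z⁻¹/2 * (∫ u, (potential S G y u - potential S G y' u)^2 ∂μ₀) + 2*c0^2 * Z2 :=
            hintH_val
        _ ≤ z⁻¹/2 * (cA * t^2 * I) + 2*(z⁻¹^3 * (D1 * t)^2) := by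
            have h4 : 2*c0^2 * Z2 ≤ 2*(z⁻¹^3 * (D1 * t)^2) := by
              have hc0nn : 0 ≤ c0^2 := sq_nonneg _
              have a1 := mul_le_mul_of_nonneg_left hZ2le hc0nn
              calc 2*c0^2 * Z2 = 2*(c0^2*Z2) := by ring
                _ ≤ 2*(c0^2*1) := by
                    exact mul_le_mul_of_nonneg_left a1 (by norm_num)
                _ = c0^2 + c0^2 := by ring
                _ ≤ z⁻¹^3 * (D1 * t)^2 + z⁻¹^3 * (D1 * t)^2 := add_le_add h3 h3
                _ = 2*(z⁻¹^3 * (D1 * t)^2) := by ring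
            exact add_le_add h1 h4
        _ = 2 * Csq * t^2 := by rw [hCsq_def]; ring
    -- conclude
    unfold hellingerDist
    have hhalf : (1/2 : ℝ) * ∫ u, (Real.sqrt (postDens μ₀ F1 u)
        - Real.sqrt (postDens μ₀ F2 u))^2 ∂μ₀ ≤ Csq * t^2 := by
      have hm := mul_le_mul_of_nonneg_left hfinal (by norm_num : (0:ℝ) ≤ 1/2)
      calc (1/2 : ℝ) * ∫ u, (Real.sqrt (postDens μ₀ F1 u)
          - Real.sqrt (postDens μ₀ F2 u))^2 ∂μ₀ ≤ 1/2 * (2 * Csq * t^2) := hm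
        _ = Csq * t^2 := by ring
    calc Real.sqrt ((1/2) * ∫ u, (Real.sqrt (postDens μ₀ F1 u)
        - Real.sqrt (postDens μ₀ F2 u))^2 ∂μ₀)
        ≤ Real.sqrt (Csq * t^2) := Real.sqrt_le_sqrt hhalf
      _ = Real.sqrt Csq * t := by
          rw [Real.sqrt_mul hCsq0, Real.sqrt_sq ht0]
      _ ≤ (Real.sqrt Csq + 1) * t :=
          mul_le_mul_of_nonneg_right (le_add_of_nonneg_right zero_le_one) ht0
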